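/- Let μ > 0, x_m ≥ 0, N > 0, let g : [0,∞) → (0,∞) be continuous, bounded and non-increasing, and let β : [x_m,∞) → [0,∞) be continuous. Let G : (0,N] → ℝ satisfy G'(z) = g(z)/z for z ∈ (0,N]; then G is strictly increasing with lim_{z→0⁺} G(z) = −∞, so it has an inverse G^{−1} : (−∞, G(N)] → (0,N]. Setting E⋆(x) := G^{−1}( G(N) − μ(x − x_m) ) for x ≥ x_m, one has the identity (with both sides possibly +∞): ∫₀^∞ β( x_m + ∫₀^a g( μN e^{−μτ}/μ ) dτ ) e^{−μa} da = (1/N) ∫_{x_m}^∞ β(x) · E⋆(x) / g(E⋆(x)) dx. In particular, with B = μN, the condition R(B) = 1 for a non-trivial stationary birth rate of the delay formulation is equivalent to the fixed-point condition N = ∫_{x_m}^∞ β(x) E⋆(x)/g(E⋆(x)) dx characterising non-trivial stationary size-densities of the PDE formulation. -/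

import Mathlib

open MeasureTheory Set Filter

private lemma lintegral_image_deriv {s : Set ℝ} {f f' : ℝ → ℝ}
    (hs : MeasurableSet s) (hf' : ∀ x ∈ s, HasDerivWithinAt f (f' x) s x)
    (hf : Set.InjOn f s) (F : ℝ → ENNReal) :
    ∫⁻ x in f '' s, F x = ∫⁻ x in s, ENNReal.ofReal |f' x| * F (f x) := by
  simpa only [ContinuousLinearMap.det_toSpanSingleton] using
    MeasureTheory.lintegral_image_eq_lintegral_abs_det_fderiv_mul volume hs
      (fun x hx => (hf' x hx).hasFDerivWithinAt) hf F

theorem stmt_19 (μ xm N : ℝ) (hμ : 0 < μ) (hxm : 0 ≤ xm) (hN : 0 < N)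
    (g β G : ℝ → ℝ)
    (hgc : ContinuousOn g (Set.Ici (0 : ℝ))) (hgpos : ∀ z ≥ (0 : ℝ), 0 < g z)
    (hgbd : ∃ C : ℝ, ∀ z ≥ (0 : ℝ), g z ≤ C)
    (hganti : AntitoneOn g (Set.Ici (0 : ℝ)))
    (hβc : ContinuousOn β (Set.Ici xm)) (hβnn : ∀ x ≥ xm, 0 ≤ β x)
    -- G is a primitive of z ↦ g(z)/z on (0, N]
    (hG : ∀ z ∈ Set.Ioc (0 : ℝ) N, HasDerivWithinAt G (g z / z) (Set.Ioc (0 : ℝ) N) z) :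
    -- G is strictly increasing on (0, N]
    StrictMonoOn G (Set.Ioc (0 : ℝ) N) ∧
    -- with lim_{z → 0⁺} G(z) = -∞
    Tendsto G (nhdsWithin 0 (Set.Ioi (0 : ℝ))) atBot ∧
    -- so it has an inverse G⁻¹ : (-∞, G(N)] → (0, N], and with
    -- E⋆(x) = G⁻¹(G(N) - μ(x - x_m)) the two steady-state conditions coincide
    ∃ Ginv : ℝ → ℝ,
      (∀ z ∈ Set.Ioc (0 : ℝ) N, Ginv (G z) = z) ∧
      (∀ y ≤ G N, Ginv y ∈ Set.Ioc (0 : ℝ) N ∧ G (Ginv y) = y) ∧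
      -- the identity (with both sides possibly +∞):
      (∫⁻ a in Set.Ioi (0 : ℝ), ENNReal.ofReal
          (β (xm + ∫ τ in (0 : ℝ)..a, g (μ * N * Real.exp (-μ * τ) / μ)) *
            Real.exp (-μ * a))) =
        ENNReal.ofReal (1 / N) *
          ∫⁻ x in Set.Ioi xm, ENNReal.ofReal
            (β x * Ginv (G N - μ * (x - xm)) / g (Ginv (G N - μ * (x - xm)))) ∧
      -- in particular, with B = μN, R(B) = 1 iff N = ∫_{x_m}^∞ β(x) E⋆(x)/g(E⋆(x)) dx
      ((∫⁻ a in Set.Ioi (0 : ℝ), ENNReal.ofReal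
          (β (xm + ∫ τ in (0 : ℝ)..a, g (μ * N * Real.exp (-μ * τ) / μ)) *
            Real.exp (-μ * a))) = 1 ↔
        (∫⁻ x in Set.Ioi xm, ENNReal.ofReal
            (β x * Ginv (G N - μ * (x - xm)) / g (Ginv (G N - μ * (x - xm))))) =
          ENNReal.ofReal N) := by
  have hGcont : ContinuousOn G (Ioc 0 N) := fun z hz => (hG z hz).continuousWithinAt
  -- derivative of G at interior points
  have hGder : ∀ z ∈ Ioo (0 : ℝ) N, HasDerivAt G (g z / z) z := by
    intro z hz
    exact (hG z (Ioo_subset_Ioc_self hz)).hasDerivAt (Ioc_mem_nhds hz.1 hz.2)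
  -- 1. Strict monotonicity
  have hmono : StrictMonoOn G (Ioc 0 N) := by
    apply strictMonoOn_of_deriv_pos (convex_Ioc 0 N) hGcont
    intro z hz
    rw [interior_Ioc] at hz
    rw [(hGder z hz).deriv]
    exact div_pos (hgpos z hz.1.le) hz.1
  -- 2. Tendsto atBot
  have hcN : 0 < g N := hgpos N hN.le
  have hbound : ∀ z ∈ Ioc (0 : ℝ) N, G z ≤ g N * Real.log z + (G N - g N * Real.log N) := by
    have hH : MonotoneOn (fun z => G z - g N * Real.log z) (Ioc 0 N) := by
      apply monotoneOn_of_deriv_nonneg (convex_Ioc 0 N)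
      · exact hGcont.sub (continuousOn_const.mul
          (Real.continuousOn_log.mono (fun z hz => ne_of_gt hz.1)))
      · intro z hz
        rw [interior_Ioc] at hz
        exact ((hGder z hz).sub
          ((Real.hasDerivAt_log (ne_of_gt hz.1)).const_mul (g N))).differentiableAt.differentiableWithinAt
      · intro z hz
        rw [interior_Ioc] at hz
        have hd : HasDerivAt (fun z => G z - g N * Real.log z) (g z / z - g N * z⁻¹) z :=
          (hGder z hz).sub ((Real.hasDerivAt_log (ne_of_gt hz.1)).const_mul (g N))
        rw [hd.deriv]
        have hgz : g N ≤ g z := hganti hz.1.le hN.le hz.2.le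
        rw [div_eq_mul_inv, ← sub_mul]
        exact mul_nonneg (by linarith) (inv_nonneg.2 hz.1.le)
    intro z hz
    have := hH hz (right_mem_Ioc.2 hN) hz.2
    simp only at this
    linarith
  have htb : Tendsto G (nhdsWithin 0 (Ioi (0 : ℝ))) atBot := by
    apply tendsto_atBot_mono' (nhdsWithin 0 (Ioi (0:ℝ)))
      (f₁ := fun z => g N * Real.log z + (G N - g N * Real.log N))
    · filter_upwards [Ioc_mem_nhdsGT_of_mem (Set.mem_Ico.2 ⟨le_refl 0, hN⟩)] with z hz
      exact hbound z hz
    · apply tendsto_atBot_add_const_right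
      exact (Real.tendsto_log_nhdsGT_zero).const_mul_atBot hcN
  refine ⟨hmono, htb, ?_⟩
  -- surjectivity onto (-∞, G N]
  have hsurj : ∀ y ≤ G N, ∃ z ∈ Ioc (0 : ℝ) N, G z = y := by
    intro y hy
    rcases eq_or_lt_of_le hy with h | h
    · exact ⟨N, right_mem_Ioc.2 hN, h.symm⟩
    · have hev : ∀ᶠ z in nhdsWithin 0 (Ioi (0:ℝ)), G z < y ∧ z ∈ Ioc (0:ℝ) N := by
        filter_upwards [htb.eventually (eventually_lt_atBot y),
          Ioc_mem_nhdsGT_of_mem (Set.mem_Ico.2 ⟨le_refl 0, hN⟩)] with z h1 h2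
        exact ⟨h1, h2⟩
      obtain ⟨z₀, hz₀y, hz₀⟩ := hev.exists
      have hsub : Icc z₀ N ⊆ Ioc 0 N := fun w hw => ⟨lt_of_lt_of_le hz₀.1 hw.1, hw.2⟩
      have : y ∈ G '' Icc z₀ N := by
        apply intermediate_value_Icc hz₀.2 (hGcont.mono hsub)
        exact ⟨hz₀y.le, hy⟩
      obtain ⟨z, hz, hzy⟩ := this
      exact ⟨z, hsub hz, hzy⟩
  classical
  set Ginv : ℝ → ℝ := fun y => if h : ∃ z ∈ Ioc (0:ℝ) N, G z = y then h.choose else N with hGinvdef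
  have hGinv_spec : ∀ y ≤ G N, Ginv y ∈ Ioc (0:ℝ) N ∧ G (Ginv y) = y := by
    intro y hy
    have h := hsurj y hy
    simp only [hGinvdef, dif_pos h]
    exact ⟨h.choose_spec.1, h.choose_spec.2⟩
  have hGle : ∀ z ∈ Ioc (0:ℝ) N, G z ≤ G N :=
    fun z hz => hmono.monotoneOn hz (right_mem_Ioc.2 hN) hz.2
  have hGinv_left : ∀ z ∈ Ioc (0:ℝ) N, Ginv (G z) = z := by
    intro z hz
    have h := hGinv_spec (G z) (hGle z hz)
    exact hmono.injOn h.1 hz h.2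
  refine ⟨Ginv, hGinv_left, hGinv_spec, ?_⟩
  -- Setup for the change of variables
  set h : ℝ → ℝ := fun a => N * Real.exp (-μ * a) with hh
  set f : ℝ → ℝ := fun a => g (h a) with hf
  have hhpos : ∀ a, 0 < h a := fun a => mul_pos hN (Real.exp_pos _)
  have hhmem : ∀ a ≥ (0:ℝ), h a ∈ Ioc (0:ℝ) N := by
    intro a ha
    refine ⟨hhpos a, ?_⟩
    have : Real.exp (-μ * a) ≤ 1 := Real.exp_le_one_iff.2 (by nlinarith)
    show N * Real.exp (-μ * a) ≤ N
    nlinarith [Real.exp_pos (-μ * a)]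
  have hhlt : ∀ a > (0:ℝ), h a < N := by
    intro a ha
    have : Real.exp (-μ * a) < 1 := Real.exp_lt_one_iff.2 (by nlinarith)
    show N * Real.exp (-μ * a) < N
    nlinarith
  have hhc : Continuous h := by continuity
  have hfc : Continuous f := by
    rw [continuous_iff_continuousAt]
    intro a
    exact (hgc.continuousAt (Ici_mem_nhds (hhpos a))).comp hhc.continuousAt
  have hfpos : ∀ a, 0 < f a := fun a => hgpos _ (hhpos a).le
  set φ : ℝ → ℝ := fun a => xm + ∫ τ in (0:ℝ)..a, f τ with hφdef
  have hφd : ∀ a, HasDerivAt φ (f a) a := by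
    intro a
    exact (intervalIntegral.integral_hasDerivAt_right (hfc.intervalIntegrable 0 a)
      hfc.aestronglyMeasurable.stronglyMeasurableAtFilter hfc.continuousAt).const_add xm
  have hφ0 : φ 0 = xm := by simp [hφdef]
  have hφmono : StrictMono φ := by
    apply strictMono_of_deriv_pos
    intro a
    rw [(hφd a).deriv]
    exact hfpos a
  have hφc : Continuous φ := continuous_iff_continuousAt.2 fun a => (hφd a).continuousAt
  -- derivative of h
  have hhd : ∀ a, HasDerivAt h (-μ * h a) a := by
    intro a
    have h1 : HasDerivAt (fun a : ℝ => -μ * a) (-μ) a := by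
      simpa using (hasDerivAt_id a).const_mul (-μ)
    have h2 := h1.exp.const_mul N
    exact h2.congr_deriv (by rw [hh]; ring)
  -- key identity : G (h a) = G N - μ (φ a - xm) for a ≥ 0
  have hkey : ∀ a ≥ (0:ℝ), G (h a) = G N - μ * (φ a - xm) := by
    intro a ha
    set ψ : ℝ → ℝ := fun a => G (h a) + μ * (φ a - xm) with hψ
    have hval : ∀ x, (g (h x) / h x) * (-μ * h x) + μ * f x = 0 := by
      intro x
      have hne : h x ≠ 0 := (hhpos x).ne'
      field_simp [hf]
      ring
    have hψd : ∀ x ≥ (0:ℝ), HasDerivWithinAt ψ 0 (Ici x) x := by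
      intro x hx
      have hmem := hhmem x hx
      have hmaps : MapsTo h (Ici x) (Ioc (0:ℝ) N) := fun w hw => hhmem w (le_trans hx hw)
      have hGh : HasDerivWithinAt (G ∘ h) ((g (h x) / h x) * (-μ * h x)) (Ici x) x :=
        (hG (h x) hmem).comp x ((hhd x).hasDerivWithinAt) hmaps
      have hφx : HasDerivWithinAt (fun a => μ * (φ a - xm)) (μ * f x) (Ici x) x :=
        (((hφd x).sub_const xm).const_mul μ).hasDerivWithinAt
      have := hGh.add hφx
      rw [hval x] at this
      exact this
    have hψdat : ∀ x > (0:ℝ), HasDerivAt ψ 0 x := by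
      intro x hx
      have hmem : h x ∈ Ioo (0:ℝ) N := ⟨hhpos x, hhlt x hx⟩
      have hGh : HasDerivAt (G ∘ h) ((g (h x) / h x) * (-μ * h x)) x :=
        (hGder (h x) hmem).comp x (hhd x)
      have hφx : HasDerivAt (fun a => μ * (φ a - xm)) (μ * f x) x :=
        ((hφd x).sub_const xm).const_mul μ
      have := hGh.add hφx
      rw [hval x] at this
      exact this
    have hψcont : ContinuousOn ψ (Icc 0 a) := by
      intro x hx
      rcases eq_or_lt_of_le hx.1 with hx0 | hx0
      · exact ((hψd x hx0.le).continuousWithinAt).mono (fun w hw => hx0 ▸ hw.1)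
      · exact (hψdat x hx0).continuousAt.continuousWithinAt
    have := constant_of_has_deriv_right_zero hψcont (fun x hx => hψd x hx.1) a
      (right_mem_Icc.2 ha)
    have hψ0 : ψ 0 = G N := by simp [hψ, hφ0, hh]
    rw [hψ0] at this
    simp only [hψ] at this
    linarith
  -- φ maps (0,∞) onto (xm,∞)
  have hφtop : Tendsto φ atTop atTop := by
    apply tendsto_atTop_mono' atTop (f₂ := φ) (f₁ := fun a => xm + g N * a)
    · filter_upwards [eventually_ge_atTop (0:ℝ)] with a ha
      have hint : ∫ τ in (0:ℝ)..a, g N ≤ ∫ τ in (0:ℝ)..a, f τ := by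
        apply intervalIntegral.integral_mono_on ha intervalIntegrable_const
          (hfc.intervalIntegrable 0 a)
        intro τ hτ
        exact hganti (hhpos τ).le hN.le (hhmem τ hτ.1).2
      have : ∫ τ in (0:ℝ)..a, g N = a * g N := by simp
      simp only [hφdef]
      nlinarith
    · apply tendsto_atTop_add_const_left
      exact tendsto_id.const_mul_atTop hcN
  have himg : φ '' (Ioi 0) = Ioi xm := by
    apply Subset.antisymm
    · rintro _ ⟨a, ha, rfl⟩
      have := hφmono (show (0:ℝ) < a from ha)
      rw [hφ0] at this
      exact this
    · intro x hx
      have hev : ∀ᶠ A in atTop, x < φ A := hφtop.eventually (eventually_gt_atTop x)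
      obtain ⟨A, hA0, hAx⟩ := ((eventually_ge_atTop (0:ℝ)).and hev).exists
      have : x ∈ φ '' Icc 0 A := by
        apply intermediate_value_Icc hA0 hφc.continuousOn
        rw [hφ0]
        exact ⟨le_of_lt hx, hAx.le⟩
      obtain ⟨c, hc, hcx⟩ := this
      refine ⟨c, ?_, hcx⟩
      rcases eq_or_lt_of_le hc.1 with hc0 | hc0
      · exfalso; rw [← hc0, hφ0] at hcx; exact (ne_of_gt hx) hcx.symm
      · exact hc0
  -- the main identity
  set F : ℝ → ENNReal := fun x => ENNReal.ofReal
      (β x * Ginv (G N - μ * (x - xm)) / g (Ginv (G N - μ * (x - xm)))) with hF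
  have e1 : ∫⁻ x in Ioi xm, F x
      = ∫⁻ a in Ioi (0:ℝ), ENNReal.ofReal (N * (β (φ a) * Real.exp (-μ * a))) := by
    rw [← himg, lintegral_image_deriv measurableSet_Ioi
      (fun a _ => (hφd a).hasDerivWithinAt) hφmono.injective.injOn]
    apply setLIntegral_congr_fun measurableSet_Ioi
    intro a ha
    have hginva : Ginv (G N - μ * (φ a - xm)) = h a := by
      rw [← hkey a (le_of_lt ha)]
      exact hGinv_left _ (hhmem a (le_of_lt ha))
    simp only [hF, hginva]
    rw [abs_of_pos (hfpos a), ← ENNReal.ofReal_mul (hfpos a).le]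
    congr 1
    have hgne : g (h a) ≠ 0 := (hfpos a).ne'
    show g (h a) * (β (φ a) * h a / g (h a)) = N * (β (φ a) * Real.exp (-μ * a))
    rw [mul_comm (g (h a)), div_mul_cancel₀ _ hgne]
    show β (φ a) * (N * Real.exp (-μ * a)) = N * (β (φ a) * Real.exp (-μ * a))
    ring
  have e2 : (∫⁻ a in Set.Ioi (0 : ℝ), ENNReal.ofReal
        (β (xm + ∫ τ in (0 : ℝ)..a, g (μ * N * Real.exp (-μ * τ) / μ)) *
          Real.exp (-μ * a)))
      = ∫⁻ a in Ioi (0:ℝ), ENNReal.ofReal (β (φ a) * Real.exp (-μ * a)) := by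
    apply setLIntegral_congr_fun measurableSet_Ioi
    intro a _
    have harg : (xm + ∫ τ in (0:ℝ)..a, g (μ * N * Real.exp (-μ * τ) / μ)) = φ a := by
      simp only [hφdef]
      congr 1
      apply intervalIntegral.integral_congr
      intro τ _
      simp only [hf, hh]
      congr 1
      field_simp
    beta_reduce
    rw [harg]
  have e3 : ENNReal.ofReal (1/N) * ∫⁻ x in Ioi xm, F x
      = ∫⁻ a in Ioi (0:ℝ), ENNReal.ofReal (β (φ a) * Real.exp (-μ * a)) := by
    rw [e1, ← lintegral_const_mul' _ _ ENNReal.ofReal_ne_top]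
    apply setLIntegral_congr_fun measurableSet_Ioi
    intro a _
    beta_reduce
    rw [← ENNReal.ofReal_mul (by positivity : (0:ℝ) ≤ 1/N),
      show 1/N * (N * (β (φ a) * Real.exp (-μ * a))) = β (φ a) * Real.exp (-μ * a) by
        field_simp]
  have hid : (∫⁻ a in Set.Ioi (0 : ℝ), ENNReal.ofReal
        (β (xm + ∫ τ in (0 : ℝ)..a, g (μ * N * Real.exp (-μ * τ) / μ)) *
          Real.exp (-μ * a)))
      = ENNReal.ofReal (1/N) * ∫⁻ x in Ioi xm, F x := by
    rw [e2, e3]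
  refine ⟨hid, ?_⟩
  rw [hid]
  have hN0 : (ENNReal.ofReal N) ≠ 0 := (ENNReal.ofReal_pos.2 hN).ne'
  have hNt : (ENNReal.ofReal N) ≠ ⊤ := ENNReal.ofReal_ne_top
  rw [show ENNReal.ofReal (1/N) = (ENNReal.ofReal N)⁻¹ by
    rw [one_div, ← ENNReal.ofReal_inv_of_pos hN], ← ENNReal.div_eq_inv_mul]
  constructor
  · intro hh1
    have := congrArg (· * ENNReal.ofReal N) hh1
    simpa [ENNReal.div_mul_cancel hN0 hNt] using this
  · intro hh1
    rw [hh1, ENNReal.div_self hN0 hNt]
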